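/- Let ν be an invariant and reversible probability measure for m. Then the Cheeger constant equals the variational constant: h_m(X) = inf{ TV_m(u) : ‖u‖_{L¹(ν)} = 1, 0 is a median of u w.r.t. ν }. -/

import Mathlib

open MeasureTheory ENNReal ProbabilityTheory Set

/-- The joint measure `dm_x(y) dν(x)` on `X × X`. -/
noncomputable def jointMeasure {X : Type*} [MeasurableSpace X] (ν : Measure X)
    (m : X → Measure X) : Measure (X × X) :=
  ν.bind (fun x => (m x).map (fun y => (x, y)))

def Reversible {X : Type*} [MeasurableSpace X] (ν : Measure X) (m : X → Measure X) : Prop :=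
  (jointMeasure ν m).map Prod.swap = jointMeasure ν m

/-!
Invariance makes the mass of `ν ⊗ₘ κ` leaving a set `D` equal to the mass entering it, so
`P(D) = P(Dᶜ)`, and it makes both marginals of `ν ⊗ₘ κ` equal to `ν`, so the increments
`u y - u x` have mean zero and `TV(u)` is the integral of their positive part. Slicing that
positive part at every level `s` gives the coarea formula `TV(u) = ∫ P({u < s}) ds`.
If `0` is a median of `u`, then `min (ν {u < s}) (ν {u ≥ s})` integrates to `‖u‖₁ = 1`, so the
Cheeger inequality `h · min (ν D) (ν Dᶜ) ≤ P(D)` on the level sets gives `h ≤ TV(u)`.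
Conversely, the normalized indicator of the lighter of `D` and `Dᶜ` is admissible and its total
variation is the Cheeger quotient of `D`.
-/

theorem lintegral_ofReal_sub_eq_lintegral_measure {α : Type*} [MeasurableSpace α]
    (μ : Measure α) [SFinite μ] {f g : α → ℝ} (hf : Measurable f) (hg : Measurable g) :
    ∫⁻ a, ENNReal.ofReal (g a - f a) ∂μ = ∫⁻ s, μ {a | f a < s ∧ s ≤ g a} := by
  have hS : MeasurableSet {p : α × ℝ | f p.1 < p.2 ∧ p.2 ≤ g p.1} :=
    (measurableSet_lt (hf.comp measurable_fst) measurable_snd).inter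
      (measurableSet_le measurable_snd (hg.comp measurable_fst))
  have h := (Measure.prod_apply (ν := volume) hS).symm.trans (Measure.prod_apply_symm (μ := μ) hS)
  simpa [preimage, ← Real.volume_Ioc, Ioc] using h

theorem measure_le_measure_compl_of_le_half {α : Type*} [MeasurableSpace α] {μ : Measure α}
    [IsProbabilityMeasure μ] {s : Set α} (hs : μ s ≤ 1 / 2) : μ s ≤ μ sᶜ :=
  calc μ s ≤ 1 / 2 := hs
    _ = 1 - 1 / 2 := (ENNReal.sub_half one_ne_top).symm
    _ ≤ 1 - μ s := tsub_le_tsub_left hs 1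
    _ ≤ μ sᶜ := by
      rw [tsub_le_iff_right, ← measure_univ (μ := μ), ← union_compl_self s, add_comm]
      exact measure_union_le s sᶜ

theorem lintegral_min_measure_lt_eq_lintegral_abs {α : Type*} [MeasurableSpace α]
    {μ : Measure α} [IsProbabilityMeasure μ] {u : α → ℝ} (hu : Measurable u)
    (hneg : μ {x | u x < 0} ≤ 1/2) (hpos : μ {x | 0 < u x} ≤ 1/2) :
    ∫⁻ s, min (μ {x | u x < s}) (μ {x | u x < s}ᶜ) = ∫⁻ x, ENNReal.ofReal |u x| ∂μ := by
  have hlow : ∫⁻ x, ENNReal.ofReal (0 - u x) ∂μ = ∫⁻ s in Iic 0, μ {x | u x < s} := by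
    rw [lintegral_ofReal_sub_eq_lintegral_measure μ hu measurable_const,
      ← lintegral_indicator measurableSet_Iic]
    refine lintegral_congr fun s => ?_
    by_cases hs : s ≤ 0 <;> simp [hs]
  have hup : ∫⁻ x, ENNReal.ofReal (u x - 0) ∂μ = ∫⁻ s in (Iic 0)ᶜ, μ {x | u x < s}ᶜ := by
    rw [lintegral_ofReal_sub_eq_lintegral_measure μ measurable_const hu,
      ← lintegral_indicator measurableSet_Iic.compl]
    refine lintegral_congr fun s => ?_
    rcases le_or_gt s 0 with hs | hs
    · simp [not_lt.2 hs]
    · simp [hs, compl_ofPred]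
  have hmin_low : ∀ s ∈ Iic (0 : ℝ), min (μ {x | u x < s}) (μ {x | u x < s}ᶜ) = μ {x | u x < s} :=
    fun s hs => min_eq_left <| measure_le_measure_compl_of_le_half <|
      (measure_mono fun x (hx : u x < s) => hx.trans_le hs).trans hneg
  have hmin_up : ∀ s ∈ (Iic (0 : ℝ))ᶜ,
      min (μ {x | u x < s}) (μ {x | u x < s}ᶜ) = μ {x | u x < s}ᶜ := by
    intro s hs
    have hs : 0 < s := not_le.1 hs
    have hsmall : μ {x | u x < s}ᶜ ≤ 1 / 2 :=
      (measure_mono fun x hx => hs.trans_le (not_lt.1 hx)).trans hpos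
    rw [min_comm]
    exact min_eq_left (by simpa using measure_le_measure_compl_of_le_half hsmall)
  rw [← lintegral_add_compl _ measurableSet_Iic, setLIntegral_congr_fun measurableSet_Iic hmin_low,
    setLIntegral_congr_fun measurableSet_Iic.compl hmin_up, ← hlow, ← hup,
    ← lintegral_add_left (by fun_prop)]
  refine lintegral_congr fun x => ?_
  rcases le_total (u x) 0 with h | h
  · simp [abs_of_nonpos h, h]
  · simp [abs_of_nonneg h, h]

namespace ProbabilityTheory.Kernel

variable {X : Type*} [MeasurableSpace X] {κ : Kernel X X} {ν : Measure X} {D : Set X} {u : X → ℝ}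

noncomputable def perimeter (κ : Kernel X X) (ν : Measure X) (D : Set X) : ℝ≥0∞ :=
  ∫⁻ x in D, κ x Dᶜ ∂ν

noncomputable def totalVariation (κ : Kernel X X) (ν : Measure X) (u : X → ℝ) : ℝ :=
  (1/2) * ∫ x, (∫ y, |u y - u x| ∂(κ x)) ∂ν

def cheegerQuotients (κ : Kernel X X) (ν : Measure X) : Set ℝ :=
  {r | ∃ D : Set X, MeasurableSet D ∧ 0 < ν D ∧ ν D < 1 ∧
    r = (∫ x in D, (κ x Dᶜ).toReal ∂ν) / min (ν D).toReal (ν Dᶜ).toReal}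

def medianZeroTotalVariations (κ : Kernel X X) (ν : Measure X) : Set ℝ :=
  {r | ∃ u : X → ℝ, Integrable u ν ∧ (∫ x, |u x| ∂ν) = 1 ∧
    ν {x | u x < 0} ≤ 1/2 ∧ ν {x | 0 < u x} ≤ 1/2 ∧ r = κ.totalVariation ν u}

theorem perimeter_compl [IsFiniteMeasure ν] [IsMarkovKernel κ] (hinv : κ.Invariant ν)
    (hD : MeasurableSet D) : κ.perimeter ν Dᶜ = κ.perimeter ν D := by
  set Q := ∫⁻ x in D, κ x D ∂ν
  have hD_out : κ.perimeter ν D + Q = ν D := by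
    rw [perimeter, ← lintegral_add_left (κ.measurable_coe hD.compl)]
    simp [add_comm (κ _ Dᶜ), measure_add_measure_compl hD]
  have hD_in : κ.perimeter ν Dᶜ + Q = ν D := by
    rw [perimeter, compl_compl, add_comm, lintegral_add_compl _ hD,
      ← Measure.bind_apply hD κ.aemeasurable, hinv.def]
  have hQ : Q ≠ ∞ := ne_top_of_le_ne_top (measure_ne_top ν D) (le_add_self.trans hD_out.le)
  rw [← ENNReal.add_left_inj hQ, hD_in, hD_out]

theorem setIntegral_toReal_eq_perimeter [IsFiniteKernel κ] (hD : MeasurableSet D) :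
    ∫ x in D, (κ x Dᶜ).toReal ∂ν = (κ.perimeter ν D).toReal :=
  integral_toReal (κ.measurable_coe hD.compl).aemeasurable
    (ae_of_all _ fun _ => measure_lt_top _ _)

theorem lintegral_ofReal_sub_eq_lintegral_perimeter [SFinite ν] [IsSFiniteKernel κ]
    (hu : Measurable u) :
    ∫⁻ p, ENNReal.ofReal (u p.2 - u p.1) ∂(ν ⊗ₘ κ) = ∫⁻ s, κ.perimeter ν {x | u x < s} := by
  refine (lintegral_ofReal_sub_eq_lintegral_measure _ (hu.comp measurable_fst)
    (hu.comp measurable_snd)).trans (lintegral_congr fun s => ?_)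
  have hs : MeasurableSet {x | u x < s} := measurableSet_lt hu measurable_const
  rw [perimeter, ← Measure.compProd_apply_prod hs hs.compl]
  congr 1
  ext p
  simp

theorem totalVariation_nonneg : 0 ≤ κ.totalVariation ν u :=
  mul_nonneg (by norm_num) (integral_nonneg fun _ => integral_nonneg fun _ => abs_nonneg _)

theorem ofReal_totalVariation [SFinite ν] [IsMarkovKernel κ] (hinv : κ.Invariant ν)
    (hu : Measurable u) (hint : Integrable u ν) :
    ENNReal.ofReal (κ.totalVariation ν u) = ∫⁻ p, ENNReal.ofReal (u p.2 - u p.1) ∂(ν ⊗ₘ κ) := by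
  have hfst : (ν ⊗ₘ κ).map Prod.fst = ν := Measure.fst_compProd ν κ
  have hsnd : (ν ⊗ₘ κ).map Prod.snd = ν := (Measure.snd_compProd ν κ).trans hinv.def
  have hint₁ : Integrable (fun p : X × X => u p.1) (ν ⊗ₘ κ) :=
    (hfst ▸ hint).comp_measurable measurable_fst
  have hint₂ : Integrable (fun p : X × X => u p.2) (ν ⊗ₘ κ) :=
    (hsnd ▸ hint).comp_measurable measurable_snd
  set f := fun p : X × X => u p.2 - u p.1
  have hf : Integrable f (ν ⊗ₘ κ) := hint₂.sub hint₁
  have hmean : ∫ p, f p ∂(ν ⊗ₘ κ) = 0 := by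
    rw [integral_sub hint₂ hint₁, ← integral_map measurable_snd.aemeasurable
      hu.aestronglyMeasurable, ← integral_map measurable_fst.aemeasurable
      hu.aestronglyMeasurable, hfst, hsnd, sub_self]
  have habs : ∀ a : ℝ, |a| = 2 * max a 0 - a := fun a => by
    rcases le_total a 0 with h | h
    · rw [abs_of_nonpos h, max_eq_right h]; ring
    · rw [abs_of_nonneg h, max_eq_left h]; ring
  have hTV : κ.totalVariation ν u = ∫ p, max (f p) 0 ∂(ν ⊗ₘ κ) := by
    rw [totalVariation, ← Measure.integral_compProd hf.abs]
    simp_rw [habs]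
    rw [integral_sub (hf.pos_part.const_mul 2) hf, integral_const_mul, hmean]
    ring
  rw [hTV, ofReal_integral_eq_lintegral_ofReal hf.pos_part
    (ae_of_all _ fun _ => le_max_right _ _)]
  simp [f, ENNReal.ofReal_max]

theorem totalVariation_congr_ae (hinv : κ.Invariant ν)
    {v : X → ℝ} (huv : u =ᵐ[ν] v) : κ.totalVariation ν u = κ.totalVariation ν v := by
  have huv' : ∀ᵐ x ∂ν, ∀ᵐ y ∂κ x, u y = v y :=
    Measure.ae_ae_of_ae_comp (hinv.def.symm ▸ huv)
  rw [totalVariation, totalVariation, integral_congr_ae]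
  filter_upwards [huv, huv'] with x hx hxy
  exact integral_congr_ae (hxy.mono fun y hy => by simp [hx, hy])

theorem totalVariation_indicator [IsFiniteMeasure ν] [IsMarkovKernel κ] (hinv : κ.Invariant ν)
    (hD : MeasurableSet D) {c : ℝ} (hc : 0 ≤ c) :
    κ.totalVariation ν (D.indicator fun _ => c) = c * (κ.perimeter ν D).toReal := by
  have hind : ∀ p : X × X,
      ENNReal.ofReal (D.indicator (fun _ => c) p.2 - D.indicator (fun _ => c) p.1)
        = (Dᶜ ×ˢ D).indicator (fun _ => ENNReal.ofReal c) p := by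
    rintro ⟨x, y⟩
    by_cases hx : x ∈ D <;> by_cases hy : y ∈ D <;> simp [hx, hy, hc]
  have h := ofReal_totalVariation hinv (measurable_const.indicator hD)
    ((integrable_const c).indicator hD)
  have hflow : ∫⁻ x in Dᶜ, κ x D ∂ν = κ.perimeter ν D := by
    rw [← perimeter_compl hinv hD, perimeter, compl_compl]
  rw [lintegral_congr hind, lintegral_indicator_const (hD.compl.prod hD),
    Measure.compProd_apply_prod hD.compl hD, hflow] at h
  rw [← ENNReal.toReal_ofReal totalVariation_nonneg, h, ENNReal.toReal_mul,
    ENNReal.toReal_ofReal hc]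

theorem cheegerQuotients_nonneg {r : ℝ} (hr : r ∈ κ.cheegerQuotients ν) : 0 ≤ r := by
  obtain ⟨D, -, -, -, rfl⟩ := hr
  exact div_nonneg (integral_nonneg fun _ => toReal_nonneg) (le_min toReal_nonneg toReal_nonneg)

theorem ofReal_sInf_cheegerQuotients_mul_le_perimeter [IsProbabilityMeasure ν] [IsFiniteKernel κ]
    (hD : MeasurableSet D) :
    ENNReal.ofReal (sInf (κ.cheegerQuotients ν)) * min (ν D) (ν Dᶜ) ≤ κ.perimeter ν D := by
  rcases eq_or_ne (min (ν D) (ν Dᶜ)) 0 with h0 | h0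
  · simp [h0]
  have hD0 : 0 < ν D := pos_iff_ne_zero.2 fun h => h0 (by simp [h])
  have hD1 : ν D < 1 := prob_le_one.lt_of_ne fun h =>
    h0 (by simp [(prob_compl_eq_zero_iff hD).2 h])
  have hmin : 0 < (min (ν D) (ν Dᶜ)).toReal := toReal_pos h0 (by simp)
  have hle : sInf (κ.cheegerQuotients ν) ≤
      (κ.perimeter ν D).toReal / (min (ν D) (ν Dᶜ)).toReal := by
    refine csInf_le ⟨0, fun _ => cheegerQuotients_nonneg⟩ ⟨D, hD, hD0, hD1, ?_⟩
    rw [setIntegral_toReal_eq_perimeter hD, toReal_min (by simp) (by simp)]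
  rw [le_div_iff₀ hmin] at hle
  calc ENNReal.ofReal (sInf (κ.cheegerQuotients ν)) * min (ν D) (ν Dᶜ)
      = ENNReal.ofReal (sInf (κ.cheegerQuotients ν) * (min (ν D) (ν Dᶜ)).toReal) := by
        rw [ENNReal.ofReal_mul (Real.sInf_nonneg fun _ => cheegerQuotients_nonneg),
          ofReal_toReal (by simp)]
    _ ≤ ENNReal.ofReal (κ.perimeter ν D).toReal := ENNReal.ofReal_le_ofReal hle
    _ ≤ κ.perimeter ν D := ofReal_toReal_le

theorem sInf_cheegerQuotients_le_totalVariation [IsProbabilityMeasure ν] [IsMarkovKernel κ]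
    (hinv : κ.Invariant ν) (hu : Measurable u) (hint : Integrable u ν)
    (hnorm : ∫ x, |u x| ∂ν = 1) (hneg : ν {x | u x < 0} ≤ 1/2) (hpos : ν {x | 0 < u x} ≤ 1/2) :
    sInf (κ.cheegerQuotients ν) ≤ κ.totalVariation ν u := by
  set h := sInf (κ.cheegerQuotients ν)
  have hlevel : ∀ s : ℝ, MeasurableSet {x | u x < s} :=
    fun s => measurableSet_lt hu measurable_const
  have hmass : ∫⁻ s, min (ν {x | u x < s}) (ν {x | u x < s}ᶜ) = 1 := by
    rw [lintegral_min_measure_lt_eq_lintegral_abs hu hneg hpos,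
      ← ofReal_integral_eq_lintegral_ofReal hint.abs (ae_of_all _ fun _ => abs_nonneg _), hnorm,
      ENNReal.ofReal_one]
  rw [← ENNReal.ofReal_le_ofReal_iff totalVariation_nonneg, ofReal_totalVariation hinv hu hint,
    lintegral_ofReal_sub_eq_lintegral_perimeter hu]
  calc ENNReal.ofReal h = ∫⁻ s, ENNReal.ofReal h * min (ν {x | u x < s}) (ν {x | u x < s}ᶜ) := by
        rw [lintegral_const_mul' _ _ ofReal_ne_top, hmass, mul_one]
    _ ≤ ∫⁻ s, κ.perimeter ν {x | u x < s} :=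
        lintegral_mono fun s => ofReal_sInf_cheegerQuotients_mul_le_perimeter (hlevel s)

theorem exists_measurable_of_mem_medianZeroTotalVariations
    (hinv : κ.Invariant ν) {r : ℝ} (hr : r ∈ κ.medianZeroTotalVariations ν) :
    ∃ u : X → ℝ, Measurable u ∧ Integrable u ν ∧ (∫ x, |u x| ∂ν) = 1 ∧
      ν {x | u x < 0} ≤ 1/2 ∧ ν {x | 0 < u x} ≤ 1/2 ∧ r = κ.totalVariation ν u := by
  obtain ⟨v, hint, hnorm, hneg, hpos, rfl⟩ := hr
  have hv := hint.aemeasurable.ae_eq_mk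
  refine ⟨_, hint.aemeasurable.measurable_mk, hint.congr hv, ?_, ?_, ?_,
    totalVariation_congr_ae hinv hv⟩
  · exact (integral_congr_ae (hv.fun_comp abs)).symm.trans hnorm
  · exact (measure_congr (hv.fun_comp (· < 0))).symm.trans_le hneg
  · exact (measure_congr (hv.fun_comp (0 < ·))).symm.trans_le hpos

theorem perimeter_div_mem_medianZeroTotalVariations [IsProbabilityMeasure ν] [IsMarkovKernel κ]
    (hinv : κ.Invariant ν) {E : Set X} (hE : MeasurableSet E) (hE0 : 0 < ν E)
    (hE_half : ν E ≤ 1/2) :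
    (κ.perimeter ν E).toReal / (ν E).toReal ∈ κ.medianZeroTotalVariations ν := by
  set c := (ν E).toReal⁻¹
  have hc : 0 < c := inv_pos.2 (toReal_pos hE0.ne' (measure_ne_top ν E))
  have habs : (fun x => |E.indicator (fun _ => c) x|) = E.indicator fun _ => c := by
    ext x; by_cases hx : x ∈ E <;> simp [hx, hc.le]
  have hneg : {x | E.indicator (fun _ => c) x < 0} = ∅ := by
    ext x; by_cases hx : x ∈ E <;> simp [hx, hc.le]
  have hpos : {x | 0 < E.indicator (fun _ => c) x} = E := by
    ext x; by_cases hx : x ∈ E <;> simp [hx, hc]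
  refine ⟨E.indicator fun _ => c, (integrable_const c).indicator hE, ?_, ?_, ?_, ?_⟩
  · rw [habs, integral_indicator_const _ hE, smul_eq_mul, measureReal_def, mul_inv_cancel₀]
    exact (toReal_pos hE0.ne' (measure_ne_top ν E)).ne'
  · simp [hneg]
  · rwa [hpos]
  · rw [totalVariation_indicator hinv hE hc.le, div_eq_inv_mul]

theorem cheegerQuotients_subset_medianZeroTotalVariations [IsProbabilityMeasure ν]
    [IsMarkovKernel κ] (hinv : κ.Invariant ν) :
    κ.cheegerQuotients ν ⊆ κ.medianZeroTotalVariations ν := by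
  rintro _ ⟨D, hD, hD0, hD1, rfl⟩
  rw [setIntegral_toReal_eq_perimeter hD, ← toReal_min (by simp) (by simp)]
  rcases le_total (ν D) (1/2) with h | h
  · rw [min_eq_left (measure_le_measure_compl_of_le_half h)]
    exact perimeter_div_mem_medianZeroTotalVariations hinv hD hD0 h
  · have hDc : ν Dᶜ ≤ 1/2 := by
      rw [prob_compl_eq_one_sub hD]
      exact (tsub_le_tsub_left h 1).trans (ENNReal.sub_half one_ne_top).le
    rw [min_eq_right (by simpa using measure_le_measure_compl_of_le_half hDc),
      ← perimeter_compl hinv hD]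
    refine perimeter_div_mem_medianZeroTotalVariations hinv hD.compl ?_ hDc
    rw [prob_compl_eq_one_sub hD]
    exact tsub_pos_of_lt hD1

theorem cheegerQuotients_nonempty [IsProbabilityMeasure ν]
    (hinv : κ.Invariant ν) (hB : (κ.medianZeroTotalVariations ν).Nonempty) :
    (κ.cheegerQuotients ν).Nonempty := by
  obtain ⟨r, hr⟩ := hB
  obtain ⟨u, hu, -, hnorm, hneg, hpos, -⟩ :=
    exists_measurable_of_mem_medianZeroTotalVariations hinv hr
  have hlt_one : (1 / 2 : ℝ≥0∞) < 1 := ENNReal.half_lt_self one_ne_zero one_ne_top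
  have hsupp : ν {x | u x < 0} ≠ 0 ∨ ν {x | 0 < u x} ≠ 0 := by
    by_contra! h
    have hu0 : ∀ᵐ x ∂ν, |u x| = 0 :=
      measure_mono_null (fun x hx => (abs_ne_zero.1 hx).lt_or_gt)
        (measure_union_null h.1 h.2)
    simp [integral_eq_zero_of_ae hu0] at hnorm
  rcases hsupp with h | h
  · exact ⟨_, _, measurableSet_lt hu measurable_const, pos_iff_ne_zero.2 h,
      hneg.trans_lt hlt_one, rfl⟩
  · exact ⟨_, _, measurableSet_lt measurable_const hu, pos_iff_ne_zero.2 h,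
      hpos.trans_lt hlt_one, rfl⟩

theorem sInf_cheegerQuotients_eq [IsProbabilityMeasure ν] [IsMarkovKernel κ]
    (hinv : κ.Invariant ν) :
    sInf (κ.cheegerQuotients ν) = sInf (κ.medianZeroTotalVariations ν) := by
  have hAB := cheegerQuotients_subset_medianZeroTotalVariations hinv
  rcases (κ.medianZeroTotalVariations ν).eq_empty_or_nonempty with hB | hB
  · rw [hB, subset_empty_iff.1 (hB ▸ hAB : κ.cheegerQuotients ν ⊆ ∅)]
  refine le_antisymm (le_csInf hB fun r hr => ?_) (csInf_le_csInf
    ⟨0, fun r hr => ?_⟩ (cheegerQuotients_nonempty hinv hB) hAB)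
  · obtain ⟨u, hu, hint, hnorm, hneg, hpos, rfl⟩ :=
      exists_measurable_of_mem_medianZeroTotalVariations hinv hr
    exact sInf_cheegerQuotients_le_totalVariation hinv hu hint hnorm hneg hpos
  · obtain ⟨u, -, -, -, -, rfl⟩ := hr
    exact totalVariation_nonneg

end ProbabilityTheory.Kernel

theorem cheeger_constant_variational_general {X : Type*} [MeasurableSpace X]
    (ν : Measure X) [IsProbabilityMeasure ν] (m : X → Measure X)
    (hm : Measurable m) (hprob : ∀ x, IsProbabilityMeasure (m x))
    (hinv : ν.bind m = ν) :
    sInf {r : ℝ | ∃ D : Set X, MeasurableSet D ∧ 0 < ν D ∧ ν D < 1 ∧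
        r = (∫ x in D, (m x Dᶜ).toReal ∂ν) / min (ν D).toReal (ν Dᶜ).toReal}
      = sInf {r : ℝ | ∃ u : X → ℝ, Integrable u ν ∧ (∫ x, |u x| ∂ν) = 1 ∧
          ν {x | u x < 0} ≤ 1/2 ∧ ν {x | 0 < u x} ≤ 1/2 ∧
          r = (1/2) * ∫ x, (∫ y, |u y - u x| ∂(m x)) ∂ν} :=
  have : IsMarkovKernel (Kernel.mk m hm) := ⟨hprob⟩
  Kernel.sInf_cheegerQuotients_eq (κ := Kernel.mk m hm) hinv

/-- Variational characterization of the Cheeger constant: for an invariant and reversible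
probability measure `ν`,
`h_m(X) = inf { P_m(D)/min(ν(D), ν(X∖D)) : 0 < ν(D) < 1 }` equals
`inf { TV_m(u) : ‖u‖_{L¹(ν)} = 1, 0 is a median of u w.r.t. ν }`. -/
theorem cheeger_constant_variational {X : Type*} [MeasurableSpace X]
    (ν : Measure X) [IsProbabilityMeasure ν] (m : X → Measure X)
    (hm : Measurable m) (hprob : ∀ x, IsProbabilityMeasure (m x))
    (hinv : ν.bind m = ν) (hrev : Reversible ν m) :
    sInf {r : ℝ | ∃ D : Set X, MeasurableSet D ∧ 0 < ν D ∧ ν D < 1 ∧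
        r = (∫ x in D, (m x Dᶜ).toReal ∂ν) / min (ν D).toReal (ν Dᶜ).toReal}
      = sInf {r : ℝ | ∃ u : X → ℝ, Integrable u ν ∧ (∫ x, |u x| ∂ν) = 1 ∧
          ν {x | u x < 0} ≤ 1/2 ∧ ν {x | 0 < u x} ≤ 1/2 ∧
          r = (1/2) * ∫ x, (∫ y, |u y - u x| ∂(m x)) ∂ν} :=
  cheeger_constant_variational_general ν m hm hprob hinv
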